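/- Let p(·)∈P(ℝⁿ) and ω∈W_{p(·)}(ℝⁿ). If s≥1 and there exists κ∈(1,∞) such that the Hardy–Littlewood maximal operator M is bounded on L^{(sp(·))'/κ}_{ω^{-κ/s}}(ℝⁿ), then M is also bounded on L^{(sp(·))'}_{ω^{-1/s}}(ℝⁿ); consequently every s∈S_ω satisfies s ≥ s_ω. -/
import Mathlib


open MeasureTheory Metric Set
open scoped ENNReal NNReal

noncomputable section

abbrev Euc (n : ℕ) := EuclideanSpace ℝ (Fin n)

namespace VarW

variable {n : ℕ}

/-- The modular associated with a variable exponent `p` (with the usual `L^∞` convention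
on the set where `p = ∞`), applied to an `ℝ≥0∞`-valued function. -/
def modular (p : Euc n → ℝ≥0∞) (g : Euc n → ℝ≥0∞) : ℝ≥0∞ :=
  ∫⁻ x, (if p x = ∞ then (if g x ≤ 1 then 0 else ∞) else g x ^ (p x).toReal) ∂volume

/-- The Luxemburg quasi-norm. -/
def luxNorm (p : Euc n → ℝ≥0∞) (g : Euc n → ℝ≥0∞) : ℝ≥0∞ :=
  sInf {lam : ℝ≥0∞ | 0 < lam ∧ lam ≠ ∞ ∧ modular p (fun x => g x / lam) ≤ 1}

/-- The weighted variable Lebesgue quasi-norm `‖f ω‖_{L^{p(·)}}` on `ℝ≥0∞`-valued functions. -/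
def wnorm (p w : Euc n → ℝ≥0∞) (g : Euc n → ℝ≥0∞) : ℝ≥0∞ :=
  luxNorm p (fun x => g x * w x)

/-- The weighted variable Lebesgue quasi-norm of a complex-valued function. -/
def wnormC (p w : Euc n → ℝ≥0∞) (f : Euc n → ℂ) : ℝ≥0∞ :=
  wnorm p w (fun x => (‖f x‖₊ : ℝ≥0∞))

def pMinus (p : Euc n → ℝ≥0∞) : ℝ≥0∞ := essInf p volume

def pPlus (p : Euc n → ℝ≥0∞) : ℝ≥0∞ := essSup p volume

/-- `p(·) ∈ 𝒫(ℝⁿ)`: a measurable variable exponent with `0 < p₋ ≤ p₊ < ∞`. -/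
def IsP (p : Euc n → ℝ≥0∞) : Prop :=
  Measurable p ∧ (∀ x, 0 < p x ∧ p x ≠ ∞) ∧ 0 < pMinus p ∧ pPlus p < ∞

def pStar (p : Euc n → ℝ≥0∞) : ℝ≥0∞ := min (pMinus p) 1

/-- conjugate exponent in `[1,∞]`: `q' = (1 - 1/q)⁻¹`. -/
def conj (q : ℝ≥0∞) : ℝ≥0∞ := (1 - q⁻¹)⁻¹

/-- indicator of a ball, `ℝ≥0∞`-valued -/
def indB (c : Euc n) (r : ℝ) : Euc n → ℝ≥0∞ := (ball c r).indicator 1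

/-- The (uncentered) Hardy--Littlewood maximal operator. -/
def mx (g : Euc n → ℝ≥0∞) (x : Euc n) : ℝ≥0∞ :=
  ⨆ (c : Euc n) (r : ℝ) (_ : 0 < r) (_ : x ∈ ball c r),
    (volume (ball c r))⁻¹ * ∫⁻ y in ball c r, g y ∂volume

/-- Boundedness of the Hardy--Littlewood maximal operator on `L^{p(·)}_w(ℝⁿ)`. -/
def MBddOn (p w : Euc n → ℝ≥0∞) : Prop :=
  ∃ C : ℝ≥0∞, 0 < C ∧ C ≠ ∞ ∧
    ∀ g : Euc n → ℝ≥0∞, Measurable g → wnorm p w (mx g) ≤ C * wnorm p w g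

/-- The class `𝒲_{p(·)}(ℝⁿ)` of variable weights. -/
def MemW (p w : Euc n → ℝ≥0∞) : Prop :=
  Measurable w ∧ (∀ᵐ x : Euc n ∂volume, 0 < w x ∧ w x ≠ ∞) ∧
  (∀ (c : Euc n) (r : ℝ), 0 < r →
    wnorm (fun x => p x / pStar p) (fun x => w x ^ (pStar p).toReal) (indB c r) ≠ ∞ ∧
    wnorm (fun x => conj (p x / pStar p)) (fun x => w x ^ (-(pStar p).toReal)) (indB c r) ≠ ∞) ∧
  (∃ s κ : ℝ, 1 < s ∧ 1 < κ ∧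
    MBddOn (fun x => conj (ENNReal.ofReal s * p x) / ENNReal.ofReal κ)
      (fun x => w x ^ (-(κ / s))))

/-- The class `A_{p(·)}(ℝⁿ)` of variable Muckenhoupt weights (Cruz-Uribe et al.). -/
def MemA (p w : Euc n → ℝ≥0∞) : Prop :=
  ∃ C : ℝ≥0∞, C ≠ ∞ ∧ ∀ (c : Euc n) (r : ℝ), 0 < r →
    luxNorm p (fun x => w x * indB c r x) *
      luxNorm (fun x => conj (p x)) (fun x => (w x)⁻¹ * indB c r x) ≤ C * volume (ball c r)


/-- `s_ω`: the infimum of those `s ≥ 1` for which the Hardy–Littlewood maximal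
operator is bounded on `L^{(sp(·))'}_{ω^{-1/s}}(ℝⁿ)`. -/
def sOmega (p w : Euc n → ℝ≥0∞) : ℝ :=
  sInf {s : ℝ | 1 ≤ s ∧
    MBddOn (fun x => conj (ENNReal.ofReal s * p x)) (fun x => w x ^ (-(1 / s)))}

/-- `s ∈ 𝕊_ω`: `s ≥ 1` and the Hardy–Littlewood maximal operator is bounded on
`L^{(sp(·))'/κ}_{ω^{-κ/s}}(ℝⁿ)` for some `κ > 1`. -/
def MemS (p w : Euc n → ℝ≥0∞) (s : ℝ) : Prop :=
  1 ≤ s ∧ ∃ κ : ℝ, 1 < κ ∧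
    MBddOn (fun x => conj (ENNReal.ofReal s * p x) / ENNReal.ofReal κ)
      (fun x => w x ^ (-(κ / s)))

/-! ### Auxiliary lemmas -/

lemma rpow_rpow_inv' (x : ℝ≥0∞) {κ : ℝ} (hκ : κ ≠ 0) : (x ^ κ) ^ κ⁻¹ = x := by
  rw [← ENNReal.rpow_mul, mul_inv_cancel₀ hκ, ENNReal.rpow_one]

lemma rpow_inv_rpow' (x : ℝ≥0∞) {κ : ℝ} (hκ : κ ≠ 0) : (x ^ κ⁻¹) ^ κ = x := by
  rw [← ENNReal.rpow_mul, inv_mul_cancel₀ hκ, ENNReal.rpow_one]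

/-- The modular of the `κ`-th power with respect to the exponent `q(·)/κ` equals the
modular of the original function with respect to `q(·)`. -/
lemma modular_div_rpow (q : Euc n → ℝ≥0∞) {κ : ℝ} (hκ : 0 < κ) (g : Euc n → ℝ≥0∞) :
    modular (fun x => q x / ENNReal.ofReal κ) (fun x => g x ^ κ) = modular q g := by
  refine lintegral_congr fun x => ?_
  have hκ0 : ENNReal.ofReal κ ≠ 0 := (ENNReal.ofReal_pos.2 hκ).ne'
  have htop : q x / ENNReal.ofReal κ = ∞ ↔ q x = ∞ := by
    rw [ENNReal.div_eq_top]
    simp [hκ0, ENNReal.ofReal_ne_top]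
  by_cases hq : q x = ∞
  · rw [if_pos (htop.2 hq), if_pos hq]
    have hiff : g x ^ κ ≤ 1 ↔ g x ≤ 1 := by
      conv_lhs => rw [show (1 : ℝ≥0∞) = 1 ^ κ from (ENNReal.one_rpow κ).symm]
      exact ENNReal.rpow_le_rpow_iff hκ
    by_cases h1 : g x ≤ 1
    · rw [if_pos (hiff.2 h1), if_pos h1]
    · rw [if_neg (fun h => h1 (hiff.1 h)), if_neg h1]
  · rw [if_neg (fun h => hq (htop.1 h)), if_neg hq,
      ENNReal.toReal_div, ENNReal.toReal_ofReal hκ.le, ← ENNReal.rpow_mul]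
    congr 1
    rw [mul_comm, div_mul_cancel₀ _ hκ.ne']

/-- The Luxemburg norm of the `κ`-th power with respect to `q(·)/κ` is the `κ`-th power
of the Luxemburg norm. -/
lemma luxNorm_div_rpow (q : Euc n → ℝ≥0∞) {κ : ℝ} (hκ : 0 < κ) (g : Euc n → ℝ≥0∞) :
    luxNorm (fun x => q x / ENNReal.ofReal κ) (fun x => g x ^ κ) = luxNorm q g ^ κ := by
  set A := {lam : ℝ≥0∞ | 0 < lam ∧ lam ≠ ∞ ∧ modular q (fun x => g x / lam) ≤ 1} with hA
  set B := {lam : ℝ≥0∞ | 0 < lam ∧ lam ≠ ∞ ∧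
      modular (fun x => q x / ENNReal.ofReal κ) (fun x => g x ^ κ / lam) ≤ 1} with hB
  have hmod : ∀ lam : ℝ≥0∞, modular (fun x => q x / ENNReal.ofReal κ)
      (fun x => g x ^ κ / lam ^ κ) = modular q (fun x => g x / lam) := by
    intro lam
    rw [← modular_div_rpow q hκ (fun x => g x / lam)]
    congr 1
    funext x
    rw [ENNReal.div_rpow_of_nonneg _ _ hκ.le]
  have hAB : ∀ lam ∈ A, lam ^ κ ∈ B := by
    rintro lam ⟨h0, ht, hm⟩
    refine ⟨?_, ?_, ?_⟩
    · rw [pos_iff_ne_zero, Ne, ENNReal.rpow_eq_zero_iff_of_pos hκ]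
      exact h0.ne'
    · rw [Ne, ENNReal.rpow_eq_top_iff_of_pos hκ]; exact ht
    · rw [hmod lam]; exact hm
  have hBA : ∀ lam ∈ B, lam ^ κ⁻¹ ∈ A := by
    rintro lam ⟨h0, ht, hm⟩
    have hκi : (0 : ℝ) < κ⁻¹ := inv_pos.2 hκ
    refine ⟨?_, ?_, ?_⟩
    · rw [pos_iff_ne_zero, Ne, ENNReal.rpow_eq_zero_iff_of_pos hκi]
      exact h0.ne'
    · rw [Ne, ENNReal.rpow_eq_top_iff_of_pos hκi]; exact ht
    · rw [← hmod (lam ^ κ⁻¹), rpow_inv_rpow' lam hκ.ne']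
      exact hm
  show sInf B = sInf A ^ κ
  apply le_antisymm
  · have h1 : sInf B ^ κ⁻¹ ≤ sInf A := by
      refine le_sInf fun lam hlam => ?_
      have := sInf_le (hAB lam hlam)
      calc sInf B ^ κ⁻¹ ≤ (lam ^ κ) ^ κ⁻¹ := ENNReal.rpow_le_rpow this (inv_pos.2 hκ).le
        _ = lam := rpow_rpow_inv' lam hκ.ne'
    calc sInf B = (sInf B ^ κ⁻¹) ^ κ := (rpow_inv_rpow' _ hκ.ne').symm
      _ ≤ sInf A ^ κ := ENNReal.rpow_le_rpow h1 hκ.le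
  · refine le_sInf fun lam hlam => ?_
    have := sInf_le (hBA lam hlam)
    calc sInf A ^ κ ≤ (lam ^ κ⁻¹) ^ κ := ENNReal.rpow_le_rpow this hκ.le
      _ = lam := rpow_inv_rpow' lam hκ.ne'

lemma modular_mono (q : Euc n → ℝ≥0∞) {g g' : Euc n → ℝ≥0∞} (h : ∀ x, g x ≤ g' x) :
    modular q g ≤ modular q g' := by
  refine lintegral_mono fun x => ?_
  by_cases hq : q x = ∞
  · rw [if_pos hq, if_pos hq]
    by_cases h1 : g' x ≤ 1
    · rw [if_pos ((h x).trans h1), if_pos h1]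
    · rw [if_neg h1]; exact le_top
  · rw [if_neg hq, if_neg hq]
    exact ENNReal.rpow_le_rpow (h x) ENNReal.toReal_nonneg

lemma luxNorm_mono (q : Euc n → ℝ≥0∞) {g g' : Euc n → ℝ≥0∞} (h : ∀ x, g x ≤ g' x) :
    luxNorm q g ≤ luxNorm q g' := by
  refine sInf_le_sInf fun lam hlam => ?_
  obtain ⟨h0, ht, hm⟩ := hlam
  exact ⟨h0, ht, le_trans (modular_mono q fun x => ENNReal.div_le_div_right (h x) lam) hm⟩

/-- Jensen's inequality for the maximal operator: `M g ≤ (M (g^κ))^{1/κ}` for `κ > 1`. -/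
lemma mx_le_rpow_mx {κ : ℝ} (hκ : 1 < κ) {g : Euc n → ℝ≥0∞} (hg : Measurable g)
    (x : Euc n) : mx g x ≤ (mx (fun y => g y ^ κ) x) ^ κ⁻¹ := by
  have hκ0 : (0 : ℝ) < κ := lt_trans one_pos hκ
  refine iSup₂_le fun c r => iSup₂_le fun hr hx => ?_
  set μB := volume (ball c r) with hμB
  have hb0 : μB ≠ 0 := (measure_ball_pos volume c hr).ne'
  have hbt : μB ≠ ∞ := measure_ball_lt_top.ne
  have hpq : Real.HolderConjugate κ (Real.conjExponent κ) :=
    Real.HolderConjugate.conjExponent hκ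
  have hold := ENNReal.lintegral_mul_le_Lp_mul_Lq (volume.restrict (ball c r)) hpq
    hg.aemeasurable (aemeasurable_const (b := (1 : ℝ≥0∞)))
  simp only [Pi.mul_apply, mul_one, one_mul, ENNReal.one_rpow, lintegral_const,
    Measure.restrict_apply MeasurableSet.univ, univ_inter, ← hμB] at hold
  -- hold : ∫⁻ y in ball c r, g y ≤ (∫⁻ y in ball c r, g y ^ κ) ^ (1/κ) * μB ^ (1/conjExponent κ)
  have key : μB⁻¹ * ∫⁻ y in ball c r, g y ∂volume ≤
      (μB⁻¹ * ∫⁻ y in ball c r, g y ^ κ ∂volume) ^ κ⁻¹ := by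
    have h1 : μB⁻¹ * ∫⁻ y in ball c r, g y ∂volume ≤
        μB⁻¹ * ((∫⁻ y in ball c r, g y ^ κ ∂volume) ^ (1 / κ) *
          μB ^ (1 / Real.conjExponent κ)) := mul_le_mul_right hold _
    refine h1.trans (le_of_eq ?_)
    rw [ENNReal.mul_rpow_of_nonneg _ _ (inv_pos.2 hκ0).le]
    have h2 : μB⁻¹ ^ κ⁻¹ = μB ^ (-κ⁻¹) := by
      rw [← ENNReal.rpow_neg_one, ← ENNReal.rpow_mul]
      norm_num
    have h3 : μB⁻¹ * μB ^ (1 / Real.conjExponent κ) = μB ^ (-κ⁻¹) := by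
      rw [← ENNReal.rpow_neg_one, ← ENNReal.rpow_add _ _ hb0 hbt]
      congr 1
      have := hpq.inv_add_inv_eq_one
      rw [one_div]
      linarith
    rw [h2, ← h3, one_div]
    ring
  refine key.trans (ENNReal.rpow_le_rpow ?_ (inv_pos.2 hκ0).le)
  exact le_iSup₂_of_le c r (le_iSup₂_of_le hr hx le_rfl)

/-- Remark `inrem`(ii). Let `p(·) ∈ 𝒫(ℝⁿ)` and `ω ∈ 𝒲_{p(·)}(ℝⁿ)`.
If `s ≥ 1` and there exists `κ ∈ (1,∞)` such that `M` is bounded on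
`L^{(sp(·))'/κ}_{ω^{-κ/s}}(ℝⁿ)`, then `M` is also bounded on
`L^{(sp(·))'}_{ω^{-1/s}}(ℝⁿ)`; consequently every `s ∈ 𝕊_ω` satisfies `s ≥ s_ω`. -/
theorem maximal_bounded_of_memS
    {n : ℕ} (hn : 0 < n) (p w : Euc n → ℝ≥0∞)
    (hp : IsP p) (hw : MemW p w) :
    (∀ s : ℝ, 1 ≤ s →
      (∃ κ : ℝ, 1 < κ ∧
        MBddOn (fun x => conj (ENNReal.ofReal s * p x) / ENNReal.ofReal κ)
          (fun x => w x ^ (-(κ / s)))) →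
      MBddOn (fun x => conj (ENNReal.ofReal s * p x)) (fun x => w x ^ (-(1 / s)))) ∧
    (∀ s : ℝ, MemS p w s → sOmega p w ≤ s) := by
  have h1 : ∀ s : ℝ, 1 ≤ s →
      (∃ κ : ℝ, 1 < κ ∧
        MBddOn (fun x => conj (ENNReal.ofReal s * p x) / ENNReal.ofReal κ)
          (fun x => w x ^ (-(κ / s)))) →
      MBddOn (fun x => conj (ENNReal.ofReal s * p x)) (fun x => w x ^ (-(1 / s))) := by
    rintro s hs ⟨κ, hκ, C, hC0, hCt, hC⟩
    have hκ0 : (0 : ℝ) < κ := lt_trans one_pos hκ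
    set q : Euc n → ℝ≥0∞ := fun x => conj (ENNReal.ofReal s * p x) with hq
    set v : Euc n → ℝ≥0∞ := fun x => w x ^ (-(1 / s)) with hv
    have hvκ : ∀ x : Euc n, v x ^ κ = w x ^ (-(κ / s)) := by
      intro x
      simp only [hv]
      rw [← ENNReal.rpow_mul]
      congr 1
      ring
    have hwn : ∀ h : Euc n → ℝ≥0∞,
        wnorm (fun x => q x / ENNReal.ofReal κ) (fun x => w x ^ (-(κ / s)))
          (fun x => h x ^ κ) = wnorm q v h ^ κ := by
      intro h
      unfold wnorm
      rw [← luxNorm_div_rpow q hκ0 (fun x => h x * v x)]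
      congr 1
      funext x
      rw [ENNReal.mul_rpow_of_nonneg _ _ hκ0.le, hvκ x]
    refine ⟨C ^ κ⁻¹, ?_, ?_, ?_⟩
    · rw [pos_iff_ne_zero, Ne, ENNReal.rpow_eq_zero_iff_of_pos (inv_pos.2 hκ0)]
      exact hC0.ne'
    · rw [Ne, ENNReal.rpow_eq_top_iff_of_pos (inv_pos.2 hκ0)]
      exact hCt
    · intro g hg
      have hgκ : Measurable fun y => g y ^ κ := hg.pow_const κ
      calc wnorm q v (mx g)
          ≤ wnorm q v (fun x => (mx (fun y => g y ^ κ) x) ^ κ⁻¹) :=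
            luxNorm_mono q fun x => mul_le_mul_left (mx_le_rpow_mx hκ hg x) _
        _ = (wnorm (fun x => q x / ENNReal.ofReal κ) (fun x => w x ^ (-(κ / s)))
              (fun x => ((mx (fun y => g y ^ κ) x) ^ κ⁻¹) ^ κ)) ^ κ⁻¹ := by
              rw [hwn, rpow_rpow_inv' _ hκ0.ne']
        _ = (wnorm (fun x => q x / ENNReal.ofReal κ) (fun x => w x ^ (-(κ / s)))
              (mx (fun y => g y ^ κ))) ^ κ⁻¹ := by
              congr 1
              apply congrArg
              funext x
              exact rpow_inv_rpow' _ hκ0.ne'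
        _ ≤ (C * wnorm (fun x => q x / ENNReal.ofReal κ) (fun x => w x ^ (-(κ / s)))
              (fun y => g y ^ κ)) ^ κ⁻¹ :=
              ENNReal.rpow_le_rpow (hC _ hgκ) (inv_pos.2 hκ0).le
        _ = C ^ κ⁻¹ * wnorm q v g := by
              rw [ENNReal.mul_rpow_of_nonneg _ _ (inv_pos.2 hκ0).le, hwn,
                rpow_rpow_inv' _ hκ0.ne']
  exact ⟨h1, fun s hs => csInf_le ⟨1, fun t ht => ht.1⟩ ⟨hs.1, h1 s hs.1 hs.2⟩⟩


end VarW
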